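/- arXiv:2411.11634 — 3 statements merged into one kernel-verified Lean document; each statement's English description precedes it below -/
import Mathlib

section
/- Let A ∈ M_n(ℤ) be non-singular with det A ≠ ±1 and P'(A) = ∅ (i.e., for every prime p dividing det A, the reduction of h_A modulo p equals x^n). Then a matrix T ∈ M_n(ℚ) satisfies T·x ∈ G_A for every x ∈ G_A if and only if every entry of T lies in ℤ[1/det A]. -/
open Matrix Polynomial

noncomputable section

/-- The matrix `A` viewed over `ℚ`. -/
def Aq {n : ℕ} (A : Matrix (Fin n) (Fin n) ℤ) : Matrix (Fin n) (Fin n) ℚ :=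
  A.map (Int.cast : ℤ → ℚ)

/-- The group `G_A = {A^k x : x ∈ ℤ^n, k ∈ ℤ} ⊆ ℚ^n`. -/
def GA {n : ℕ} (A : Matrix (Fin n) (Fin n) ℤ) : Set (Fin n → ℚ) :=
  {v | ∃ (k : ℤ) (x : Fin n → ℤ), v = (Aq A ^ k) *ᵥ fun i => ((x i : ℚ))}

/-- The ring `ℤ[1 / det A] ⊆ ℚ`. -/
def Rdet {n : ℕ} (A : Matrix (Fin n) (Fin n) ℤ) : Set ℚ :=
  {r | ∃ (a : ℤ) (l : ℕ), r = (a : ℚ) / ((A.det : ℚ)) ^ l}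

/-- `P'(A)`: primes dividing `det A` such that `h_A ≢ x^n (mod p)`. -/
def Pbad {n : ℕ} (A : Matrix (Fin n) (Fin n) ℤ) : Set ℕ :=
  {p | p.Prime ∧ (p : ℤ) ∣ A.det ∧ A.charpoly.map (Int.castRingHom (ZMod p)) ≠ X ^ n}

section Aux

variable {n : ℕ} (A : Matrix (Fin n) (Fin n) ℤ)

lemma rdet_intCast (z : ℤ) : (z : ℚ) ∈ Rdet A := ⟨z, 0, by simp⟩

lemma rdet_add (hA : A.det ≠ 0) {x y : ℚ} (hx : x ∈ Rdet A) (hy : y ∈ Rdet A) :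
    x + y ∈ Rdet A := by
  obtain ⟨a, l, rfl⟩ := hx
  obtain ⟨b, m, rfl⟩ := hy
  have hd : ((A.det : ℚ)) ≠ 0 := Int.cast_ne_zero.mpr hA
  refine ⟨a * A.det ^ m + b * A.det ^ l, l + m, ?_⟩
  rw [div_add_div _ _ (pow_ne_zero _ hd) (pow_ne_zero _ hd), pow_add]
  congr 1
  · push_cast; ring

lemma rdet_mul (hA : A.det ≠ 0) {x y : ℚ} (hx : x ∈ Rdet A) (hy : y ∈ Rdet A) :
    x * y ∈ Rdet A := by
  obtain ⟨a, l, rfl⟩ := hx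
  obtain ⟨b, m, rfl⟩ := hy
  have hd : ((A.det : ℚ)) ≠ 0 := Int.cast_ne_zero.mpr hA
  refine ⟨a * b, l + m, ?_⟩
  rw [div_mul_div_comm, pow_add]
  congr 1
  push_cast
  try ring

lemma aq_map : Aq A = (Int.castRingHom ℚ).mapMatrix A := by
  ext i j
  simp [Aq, RingHom.mapMatrix_apply, Matrix.map_apply]

lemma aq_pow_map (m : ℕ) : Aq A ^ m = (Int.castRingHom ℚ).mapMatrix (A ^ m) := by
  rw [aq_map, map_pow]

lemma pow_entries_dvd (hA : A.det ≠ 0) (hP' : Pbad A = ∅) (l : ℕ) :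
    ∃ k : ℕ, ∀ i j, A.det ^ l ∣ (A ^ k) i j := by
  classical
  set D := A.det.natAbs with hD
  have hD0 : D ≠ 0 := Int.natAbs_ne_zero.mpr hA
  set r : ℤ := ∏ p ∈ D.primeFactors, (p : ℤ) with hr
  have hcoeff : ∀ i : Fin n, r ∣ A.charpoly.coeff i := by
    intro i
    apply Finset.prod_dvd_of_coprime
    · intro p hp q hq hpq
      have pp := Nat.prime_of_mem_primeFactors (Finset.mem_coe.mp hp)
      have pq := Nat.prime_of_mem_primeFactors (Finset.mem_coe.mp hq)
      exact Nat.Coprime.isCoprime ((Nat.coprime_primes pp pq).mpr hpq)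
    · intro p hp
      have pp := Nat.prime_of_mem_primeFactors hp
      have hpdet : (p : ℤ) ∣ A.det := by
        have h1 : (p : ℤ) ∣ (D : ℤ) :=
          Int.natCast_dvd_natCast.mpr (Nat.dvd_of_mem_primeFactors hp)
        exact h1.trans (Int.natAbs_dvd.mpr dvd_rfl)
      have hmap : A.charpoly.map (Int.castRingHom (ZMod p)) = X ^ n := by
        by_contra hne
        have hmem : p ∈ Pbad A := ⟨pp, hpdet, hne⟩
        rw [hP'] at hmem
        exact hmem
      haveI : NeZero p := ⟨pp.ne_zero⟩
      have h0 : ((A.charpoly.coeff (i : ℕ) : ZMod p)) = 0 := by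
        have hc := congrArg (fun q => Polynomial.coeff q (i : ℕ)) hmap
        simpa [coeff_map, coeff_X_pow, (Fin.is_lt i).ne] using hc
      exact (ZMod.intCast_zmod_eq_zero_iff_dvd _ p).mp h0
  choose b hb using hcoeff
  have hch : A ^ n = r • (-(∑ i : Fin n, b i • A ^ (i : ℕ))) := by
    have hdeg : A.charpoly.natDegree = n := by
      rw [A.charpoly_natDegree_eq_dim, Fintype.card_fin]
    have hsum : ∑ i ∈ Finset.range (A.charpoly.natDegree + 1), A.charpoly.coeff i • A ^ i = 0 := by
      rw [← aeval_eq_sum_range]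
      exact A.aeval_self_charpoly
    rw [hdeg, Finset.sum_range_succ] at hsum
    have hlead : A.charpoly.coeff A.charpoly.natDegree = 1 := A.charpoly_monic.coeff_natDegree
    rw [hdeg] at hlead
    rw [hlead, one_smul] at hsum
    have hAn : A ^ n = -∑ i ∈ Finset.range n, A.charpoly.coeff i • A ^ i := by
      rw [eq_neg_iff_add_eq_zero, add_comm]
      exact hsum
    rw [hAn, ← Fin.sum_univ_eq_sum_range (fun i => A.charpoly.coeff i • A ^ i) n,
      smul_neg, Finset.smul_sum]
    congr 1
    apply Finset.sum_congr rfl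
    intro i _
    rw [hb i]
    exact mul_smul _ _ _
  set B := -(∑ i : Fin n, b i • A ^ (i : ℕ)) with hB
  have hQ0 : (∏ p ∈ D.primeFactors, p) ≠ 0 :=
    Finset.prod_ne_zero_iff.mpr fun p hp => (Nat.prime_of_mem_primeFactors hp).ne_zero
  have hnat : D ∣ (∏ p ∈ D.primeFactors, p) ^ D := by
    rw [← Nat.factorization_le_iff_dvd hD0 (pow_ne_zero _ hQ0)]
    intro p
    rw [Nat.factorization_pow]
    simp only [Finsupp.smul_apply, smul_eq_mul]
    by_cases hp : p ∈ D.primeFactors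
    · have pp := Nat.prime_of_mem_primeFactors hp
      have hpos : 0 < (∏ p ∈ D.primeFactors, p).factorization p :=
        pp.factorization_pos_of_dvd hQ0 (Finset.dvd_prod_of_mem _ hp)
      calc D.factorization p ≤ D := (Nat.factorization_lt p hD0).le
        _ ≤ D * (∏ p ∈ D.primeFactors, p).factorization p := Nat.le_mul_of_pos_right _ hpos
    · have : D.factorization p = 0 := by
        rw [← Finsupp.notMem_support_iff, Nat.support_factorization]
        exact hp
      simp [this]
  have hdetr : A.det ∣ r ^ D := by
    apply Int.natAbs_dvd.mp
    have : r ^ D = (((∏ p ∈ D.primeFactors, p) ^ D : ℕ) : ℤ) := by push_cast [hr]; ring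
    rw [this]
    exact_mod_cast Int.natCast_dvd_natCast.mpr hnat
  refine ⟨n * (l * D), fun i j => ?_⟩
  have hpow : A ^ (n * (l * D)) = r ^ (l * D) • B ^ (l * D) := by
    rw [pow_mul, hch, _root_.smul_pow]
  have hdvd : A.det ^ l ∣ r ^ (l * D) := by
    have h1 : A.det ^ l ∣ (r ^ D) ^ l := pow_dvd_pow_of_dvd hdetr l
    rwa [← pow_mul, mul_comm D l] at h1
  rw [hpow]
  simpa [Matrix.smul_apply, smul_eq_mul] using hdvd.mul_right ((B ^ (l * D)) i j)

lemma ga_mem_rdet (hA : A.det ≠ 0) {v : Fin n → ℚ} (hv : v ∈ GA A) (i : Fin n) :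
    v i ∈ Rdet A := by
  have hd : ((A.det : ℚ)) ≠ 0 := Int.cast_ne_zero.mpr hA
  obtain ⟨k, x, rfl⟩ := hv
  obtain ⟨m, rfl | rfl⟩ := k.eq_nat_or_neg
  · rw [zpow_natCast, aq_pow_map]
    refine ⟨∑ j, (A ^ m) i j * x j, 0, ?_⟩
    simp only [pow_zero, div_one]
    push_cast
    simp [RingHom.mapMatrix_apply, Matrix.mulVec, dotProduct, Matrix.map_apply]
  · have hu : IsUnit (Aq A ^ m).det := by
      apply isUnit_iff_ne_zero.mpr
      rw [aq_pow_map, ← RingHom.map_det]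
      rw [Matrix.det_pow]
      simp only [eq_intCast]
      push_cast
      exact pow_ne_zero _ (by push_cast at hd; exact hd)
    rw [Matrix.zpow_neg_natCast, Matrix.inv_def]
    refine ⟨(adjugate (A ^ m) *ᵥ x) i, m, ?_⟩
    have hdet : (Aq A ^ m).det = ((A.det : ℚ)) ^ m := by
      rw [aq_pow_map, ← RingHom.map_det, Matrix.det_pow]
      simp
    have hadj : (Aq A ^ m).adjugate = (Int.castRingHom ℚ).mapMatrix (adjugate (A ^ m)) := by
      rw [aq_pow_map, ← RingHom.map_adjugate]
    rw [hdet, hadj, smul_mulVec]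
    simp only [Pi.smul_apply, smul_eq_mul]
    rw [Ring.inverse_eq_inv, div_eq_inv_mul]
    congr 1
    simp [RingHom.mapMatrix_apply, Matrix.mulVec, dotProduct, Matrix.map_apply]

lemma rdet_mem_ga (hA : A.det ≠ 0) (hP' : Pbad A = ∅) {v : Fin n → ℚ}
    (hv : ∀ i, v i ∈ Rdet A) : v ∈ GA A := by
  classical
  have hd : ((A.det : ℚ)) ≠ 0 := Int.cast_ne_zero.mpr hA
  choose a lv hvl using hv
  set l : ℕ := Finset.univ.sup lv with hl
  set w : Fin n → ℤ := fun i => a i * A.det ^ (l - lv i) with hw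
  have hvw : ∀ i, v i = (w i : ℚ) / (A.det : ℚ) ^ l := by
    intro i
    have hle : lv i ≤ l := Finset.le_sup (Finset.mem_univ i)
    rw [hvl i, hw]
    push_cast
    push_cast at hd
    rw [div_eq_div_iff (pow_ne_zero _ hd) (pow_ne_zero _ hd)]
    rw [mul_assoc, ← pow_add]
    rw [Nat.sub_add_cancel hle]
  obtain ⟨k, hk⟩ := pow_entries_dvd A hA hP' l
  have hx : ∀ i, ∃ z : ℤ, ∑ j, (A ^ k) i j * w j = A.det ^ l * z := by
    intro i
    have : A.det ^ l ∣ ∑ j, (A ^ k) i j * w j :=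
      Finset.dvd_sum fun j _ => (hk i j).mul_right _
    exact this
  choose x hxx using hx
  refine ⟨-(k : ℤ), x, ?_⟩
  have hu : IsUnit (Aq A ^ k).det := by
    apply isUnit_iff_ne_zero.mpr
    rw [aq_pow_map, ← RingHom.map_det, Matrix.det_pow]
    simp only [eq_intCast]
    push_cast
    exact pow_ne_zero _ (by push_cast at hd; exact hd)
  have hu0 : IsUnit (Aq A).det := by
    apply isUnit_iff_ne_zero.mpr
    have := aq_pow_map A 1
    rw [pow_one] at this
    rw [this, ← RingHom.map_det]
    simpa using hd
  have key : (Aq A ^ k) *ᵥ v = fun i => ((x i : ℚ)) := by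
    funext i
    rw [aq_pow_map]
    simp only [RingHom.mapMatrix_apply, Matrix.mulVec, dotProduct, Matrix.map_apply]
    have h2 : (↑(∑ j, (A ^ k) i j * w j) : ℚ) / (A.det : ℚ) ^ l
        = ∑ j, ((A ^ k) i j : ℚ) * v j := by
      push_cast
      rw [Finset.sum_div]
      apply Finset.sum_congr rfl
      intro j _
      rw [hvw j]
      push_cast
      ring
    rw [show ∑ j, (Int.castRingHom ℚ) ((A ^ k) i j) * v j = ∑ j, ((A ^ k) i j : ℚ) * v j by
      simp, ← h2, hxx i]
    push_cast
    rw [mul_comm, mul_div_assoc, div_self (pow_ne_zero _ (by push_cast at hd; exact hd)), mul_one]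
  rw [Matrix.zpow_neg hu0, zpow_natCast, ← key, Matrix.mulVec_mulVec,
    Matrix.nonsing_inv_mul _ hu, Matrix.one_mulVec]

end Aux

/-- if `det A ≠ ±1` and `P'(A) = ∅`, then `T(G_A) ⊆ G_A` iff all entries of
`T` lie in `ℤ[1/det A]`. -/
theorem stmt2 (n : ℕ) (A : Matrix (Fin n) (Fin n) ℤ) (hA : A.det ≠ 0)
    (hA1 : A.det ≠ 1) (hA2 : A.det ≠ -1) (hP' : Pbad A = ∅)
    (T : Matrix (Fin n) (Fin n) ℚ) :
    (∀ v ∈ GA A, T *ᵥ v ∈ GA A) ↔ ∀ i j, T i j ∈ Rdet A := by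
  constructor
  · intro hT i j
    have hej : (fun i' => ((Pi.single j (1 : ℤ) : Fin n → ℤ) i' : ℚ)) ∈ GA A :=
      ⟨0, Pi.single j 1, by simp⟩
    have hmem := hT _ hej
    have hcol : (T *ᵥ fun i' => ((Pi.single j (1 : ℤ) : Fin n → ℤ) i' : ℚ)) =
        fun i' => T i' j := by
      funext i'
      simp [Matrix.mulVec, dotProduct, Pi.single_apply]
    rw [hcol] at hmem
    exact ga_mem_rdet A hA hmem i
  · intro hT v hv
    apply rdet_mem_ga A hA hP'
    intro i
    have hrw : (T *ᵥ v) i = ∑ j, T i j * v j := by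
      simp [Matrix.mulVec, dotProduct]
    rw [hrw]
    refine Finset.sum_induction _ (· ∈ Rdet A)
      (fun a b ha hb => rdet_add A hA ha hb) ⟨0, 0, by simp⟩ ?_
    intro j _
    exact rdet_mul A hA (hT i j) (ga_mem_rdet A hA hv j)
end
end

section
/- Let λ₁, λ₂, u, v ∈ ℤ with gcd(u,v) = 1 and v dividing λ₁ − λ₂; let Λ = diag(λ₁, λ₂), M = [[1, u], [0, v]], and A = M·Λ·M⁻¹, and assume A ∈ M_2(ℤ) is non-singular with P'(A) ≠ ∅. Assume there exists a prime dividing λ₁ that does not divide λ₂, and a prime dividing λ₂ that does not divide λ₁. Then a matrix T ∈ M_2(ℚ) satisfies T·x ∈ G_A for all x ∈ G_A if and only if there exist x₁, x₂ ∈ ℚ such that T = M·diag(x₁, x₂)·M⁻¹, λ₁^k·x₁ ∈ ℤ for some k ∈ ℕ, λ₂^k·x₂ ∈ ℤ for some k ∈ ℕ, and (x₁ − x₂)/v ∈ ℤ[1/det A]. -/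
open Matrix Polynomial

noncomputable section

/-- The matrix `M = [[1, u], [0, v]]` over `ℚ`. -/
def M2q (u v : ℤ) : Matrix (Fin 2) (Fin 2) ℚ := !![1, (u : ℚ); 0, (v : ℚ)]

/-- Key "infinite divisibility" lemma: a rational whose numerator is divisible by
arbitrarily large powers of a prime must vanish. -/
lemma keyzero (B : ℚ) (lA lB : ℤ) (q : ℕ) (hq : q.Prime)
    (hqA : ¬ (q:ℤ) ∣ lA) (hqB : (q:ℤ) ∣ lB)
    (h : ∀ k : ℕ, ∃ (n : ℕ) (w : ℤ), B * (lA:ℚ)^n = (w:ℚ) * (lB:ℚ)^k) : B = 0 := by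
  by_contra hB
  have hnum : B.num ≠ 0 := Rat.num_ne_zero.mpr hB
  have key : ∀ k : ℕ, (q:ℤ)^k ∣ B.num := by
    intro k
    obtain ⟨n, w, hw⟩ := h k
    have hd : (B.den : ℚ) ≠ 0 := by positivity
    have hq' : (B.num * lA^n : ℚ) = ((w * lB^k * B.den : ℤ) : ℚ) := by
      push_cast
      rw [← Rat.num_div_den B] at hw
      field_simp at hw
      linear_combination hw
    have hZ : B.num * lA^n = w * lB^k * (B.den : ℤ) := by exact_mod_cast hq'
    have hdvd : (q:ℤ)^k ∣ B.num * lA^n := by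
      rw [hZ]
      exact Dvd.dvd.mul_right (Dvd.dvd.mul_left (pow_dvd_pow_of_dvd hqB k) w) _
    have hcop : IsCoprime ((q:ℤ)^k) (lA^n) :=
      (((Nat.prime_iff_prime_int.mp hq).coprime_iff_not_dvd).mpr hqA).pow
    exact hcop.dvd_of_dvd_mul_right hdvd
  have h1 := key B.num.natAbs
  have h2 : q ^ B.num.natAbs ∣ B.num.natAbs := by
    have h2' := Int.natAbs_dvd_natAbs.mpr h1
    rwa [Int.natAbs_pow, Int.natAbs_natCast] at h2'
  have h3 : q ^ B.num.natAbs ≤ B.num.natAbs :=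
    Nat.le_of_dvd (Int.natAbs_pos.mpr hnum) h2
  have h4 : B.num.natAbs < 2 ^ B.num.natAbs := Nat.lt_two_pow_self
  have h5 : 2 ^ B.num.natAbs ≤ q ^ B.num.natAbs :=
    Nat.pow_le_pow_left hq.two_le _
  omega

/-- Bezout step: if `u*x` and `v*x` are integers and `gcd u v = 1` then `x` is an integer. -/
lemma intify (u v : ℤ) (hcop : Int.gcd u v = 1) (x : ℚ)
    (h1 : ∃ z : ℤ, (u:ℚ) * x = z) (h2 : ∃ z : ℤ, (v:ℚ) * x = z) :
    ∃ z : ℤ, x = z := by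
  obtain ⟨r, s, hrs⟩ := Int.isCoprime_iff_gcd_eq_one.mpr hcop
  obtain ⟨z1, hz1⟩ := h1
  obtain ⟨z2, hz2⟩ := h2
  refine ⟨r * z1 + s * z2, ?_⟩
  have : ((r*u+s*v : ℤ) : ℚ) * x = (r:ℚ)*((u:ℚ)*x) + (s:ℚ)*((v:ℚ)*x) := by push_cast; ring
  rw [hrs] at this
  push_cast at this ⊢
  rw [hz1, hz2] at this
  simpa using this

lemma Aq_pow {n : ℕ} (A : Matrix (Fin n) (Fin n) ℤ) (m : ℕ) :
    Aq (A ^ m) = (Aq A) ^ m := by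
  simpa [Aq, RingHom.mapMatrix_apply] using
    map_pow ((Int.castRingHom ℚ).mapMatrix) A m

lemma Aq_mulVec {n : ℕ} (B : Matrix (Fin n) (Fin n) ℤ) (z : Fin n → ℤ) :
    (Aq B) *ᵥ (fun i => ((z i : ℚ))) = fun i => (((B *ᵥ z) i : ℤ) : ℚ) := by
  funext i
  simp [Aq, Matrix.mulVec, dotProduct]

lemma Aq_fin_two (a b c d : ℤ) : Aq !![a,b;c,d] = !![(a:ℚ),(b:ℚ);(c:ℚ),(d:ℚ)] := by
  ext i j
  fin_cases i <;> fin_cases j <;> simp [Aq]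

lemma mem_GA_iff {n : ℕ} {A : Matrix (Fin n) (Fin n) ℤ} (hA : A.det ≠ 0)
    (x : Fin n → ℚ) :
    x ∈ GA A ↔ ∃ (m : ℕ) (z : Fin n → ℤ), (Aq A) ^ m *ᵥ x = fun i => ((z i : ℚ)) := by
  have hU : IsUnit (Aq A).det := by
    have : (Aq A).det = ((A.det : ℤ) : ℚ) := by
      simpa [Aq, RingHom.mapMatrix_apply] using (RingHom.map_det (Int.castRingHom ℚ) A).symm
    rw [this]
    exact isUnit_iff_ne_zero.mpr (by exact_mod_cast hA)
  constructor
  · rintro ⟨k, z, rfl⟩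
    obtain ⟨m, rfl | rfl⟩ := Int.eq_nat_or_neg k
    · refine ⟨0, A ^ m *ᵥ z, ?_⟩
      rw [pow_zero, Matrix.one_mulVec, zpow_natCast, ← Aq_pow, Aq_mulVec]
    · refine ⟨m, z, ?_⟩
      rw [Matrix.mulVec_mulVec, ← zpow_natCast (Aq A) m, ← Matrix.zpow_add hU]
      simp
  · rintro ⟨m, z, hz⟩
    refine ⟨-(m : ℤ), z, ?_⟩
    rw [← hz, Matrix.mulVec_mulVec, ← zpow_natCast (Aq A) m, ← Matrix.zpow_add hU]
    simp

lemma vec2_eq_iff (a b c d : ℚ) : ![a,b] = ![c,d] ↔ a = c ∧ b = d := by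
  constructor
  · intro h
    exact ⟨congrFun h 0, congrFun h 1⟩
  · rintro ⟨rfl, rfl⟩; rfl

lemma vec2_eta (z : Fin 2 → ℤ) : (fun i => ((z i : ℚ))) = ![(z 0 : ℚ), (z 1 : ℚ)] := by
  funext i; fin_cases i <;> simp

/-- Membership in `G_A` in terms of the two coordinates. -/
lemma GA_pair_iff (lam1 lam2 u v : ℤ)
    (A : Matrix (Fin 2) (Fin 2) ℤ)
    (hpow : ∀ m : ℕ, (Aq A) ^ m
      = !![(lam1:ℚ)^m, (u:ℚ)*((lam2:ℚ)^m-(lam1:ℚ)^m)/v; 0, (lam2:ℚ)^m])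
    (GAiff : ∀ x : Fin 2 → ℚ, x ∈ GA A ↔
      ∃ (m : ℕ) (z : Fin 2 → ℤ), (Aq A) ^ m *ᵥ x = fun i => ((z i : ℚ)))
    (x y : ℚ) :
    (![x,y] ∈ GA A ↔ ∃ (n:ℕ) (z1 z2 : ℤ),
      (lam1:ℚ)^n*x + (u:ℚ)*((lam2:ℚ)^n-(lam1:ℚ)^n)/v*y = z1 ∧ (lam2:ℚ)^n*y = z2) := by
  have hmv : ∀ (m : ℕ), (Aq A)^m *ᵥ ![x,y]
      = ![(lam1:ℚ)^m*x + (u:ℚ)*((lam2:ℚ)^m-(lam1:ℚ)^m)/v*y, (lam2:ℚ)^m*y] := by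
    intro m
    rw [hpow m]
    funext i
    fin_cases i <;> simp [Matrix.mulVec, dotProduct, Fin.sum_univ_two]
  rw [GAiff]
  constructor
  · rintro ⟨m, z, hz⟩
    exact ⟨m, z 0, z 1, by
      rw [hmv m, vec2_eta, vec2_eq_iff] at hz
      exact hz⟩
  · rintro ⟨n, z1, z2, h1, h2⟩
    refine ⟨n, ![z1, z2], ?_⟩
    rw [hmv n, vec2_eta]
    simp only [Matrix.cons_val_zero, Matrix.cons_val_one, Matrix.head_cons]
    rw [vec2_eq_iff]
    exact ⟨h1, h2⟩

/-- Core of the forward direction. -/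
lemma fwdCore (lam1 lam2 u v : ℤ) (hcop : Int.gcd u v = 1) (hdvd : v ∣ lam1 - lam2)
    (hv : (v:ℚ) ≠ 0) (hl1 : (lam1:ℚ) ≠ 0) (hl2 : (lam2:ℚ) ≠ 0)
    (hb1 : ∃ p : ℕ, p.Prime ∧ (p : ℤ) ∣ lam1 ∧ ¬ (p : ℤ) ∣ lam2)
    (hb2 : ∃ p : ℕ, p.Prime ∧ (p : ℤ) ∣ lam2 ∧ ¬ (p : ℤ) ∣ lam1)
    (t00 t01 t10 t11 : ℚ)
    (hstab2 : ∀ x y : ℚ,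
      (∃ (n:ℕ) (z1 z2 : ℤ),
        (lam1:ℚ)^n*x + (u:ℚ)*((lam2:ℚ)^n-(lam1:ℚ)^n)/v*y = z1 ∧ (lam2:ℚ)^n*y = z2) →
      (∃ (n:ℕ) (z1 z2 : ℤ),
        (lam1:ℚ)^n*(t00*x+t01*y) + (u:ℚ)*((lam2:ℚ)^n-(lam1:ℚ)^n)/v*(t10*x+t11*y) = z1
          ∧ (lam2:ℚ)^n*(t10*x+t11*y) = z2)) :
    t10 = 0 ∧ (v:ℚ)*t01 = u*(t11-t00) ∧
      (∃ (n:ℕ) (m:ℤ), (lam1:ℚ)^n*t00 = m) ∧ (∃ (n:ℕ) (m:ℤ), (lam2:ℚ)^n*t11 = m) ∧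
      (∃ (a : ℤ) (l : ℕ), (t00 - t11)/(v:ℚ) = (a:ℚ)/((lam1:ℚ)*(lam2:ℚ))^l) := by
  obtain ⟨p, hp, hpd, hpn⟩ := hb1
  obtain ⟨q, hq, hqd, hqn⟩ := hb2
  -- step (i): t10 = 0
  have ht10 : t10 = 0 := by
    apply keyzero t10 lam2 lam1 p hp hpn hpd
    intro k
    obtain ⟨n, z1, z2, h1, h2⟩ := hstab2 (1/(lam1:ℚ)^k) 0
      ⟨k, 1, 0, by field_simp; simp, by simp⟩
    refine ⟨n, z2, ?_⟩
    field_simp at h2 ⊢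
    linear_combination h2
  -- step (ii)
  have hB : (u:ℚ)*t00 + v*t01 - u*t11 = 0 := by
    have h0 : (v:ℚ)*((u:ℚ)*t00 + v*t01 - u*t11) = 0 := by
      apply keyzero _ lam1 lam2 q hq hqn hqd
      intro k
      obtain ⟨n, z1, z2, h1, h2⟩ := hstab2 ((u:ℚ)/(lam2:ℚ)^k) ((v:ℚ)/(lam2:ℚ)^k)
        ⟨k, u, v, by field_simp; ring, by field_simp⟩
      rw [ht10] at h1 h2
      refine ⟨n, v*z1 - u*z2, ?_⟩
      push_cast
      linear_combination (norm := (field_simp; ring1))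
        ((v:ℚ)*(lam2:ℚ)^k)*h1 - ((u:ℚ)*(lam2:ℚ)^k)*h2
    rcases mul_eq_zero.mp h0 with h | h
    · exact absurd h hv
    · exact h
  have ht01 : (v:ℚ)*t01 = u*(t11-t00) := by linear_combination hB
  -- step (iii)
  have hiii : ∃ (n:ℕ) (m:ℤ), (lam1:ℚ)^n*t00 = m := by
    obtain ⟨n, z1, z2, h1, h2⟩ := hstab2 1 0 ⟨0, 1, 0, by simp, by simp⟩
    refine ⟨n, z1, ?_⟩
    rw [ht10] at h1
    linear_combination h1
  -- step (iv)
  have hiv : ∃ (n:ℕ) (m:ℤ), (lam2:ℚ)^n*t11 = m := by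
    obtain ⟨n, z1, z2, h1, h2⟩ := hstab2 (u:ℚ) (v:ℚ) ⟨0, u, v, by simp, by simp⟩
    rw [ht10] at h1 h2
    obtain ⟨m, hm⟩ := intify u v hcop ((lam2:ℚ)^n * t11)
      ⟨z1, by linear_combination (norm := (field_simp; ring1)) h1 - (lam1:ℚ)^n*hB⟩
      ⟨z2, by linear_combination h2⟩
    exact ⟨n, m, hm⟩
  -- step (v)
  obtain ⟨n1, m1, hm1⟩ := hiii
  obtain ⟨n2, m2, hm2⟩ := hiv
  obtain ⟨n3, z1, z2, h1, h2⟩ := hstab2 0 1 ⟨0, 0, 1, by simp, by simp⟩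
  rw [ht10] at h1 h2
  have hxi3 : (u:ℚ)*(((lam1:ℚ)^n3*t00 - (lam2:ℚ)^n3*t11)/v) = -z1 := by
    field_simp at h1 ⊢
    linear_combination -h1 + ((lam1:ℚ)^n3)*ht01
  set N := n1 + n2 + n3 with hN
  obtain ⟨cc, hcc⟩ : v ∣ lam1^(n1+n2) - lam2^(n1+n2) :=
    dvd_trans hdvd (sub_dvd_pow_sub_pow lam1 lam2 _)
  have hccq : (lam1:ℚ)^(n1+n2) - (lam2:ℚ)^(n1+n2) = (v:ℚ)*cc := by
    exact_mod_cast congrArg (Int.cast : ℤ → ℚ) hcc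
  have huxi : (u:ℚ)*(((lam1:ℚ)^N*t00 - (lam2:ℚ)^N*t11)/v)
      = ((-(lam1^(n1+n2)*z1) + cc*u*z2 : ℤ) : ℚ) := by
    push_cast
    rw [hN]
    linear_combination (norm := (field_simp; ring1))
      ((lam1:ℚ)^(n1+n2))*hxi3 + ((u:ℚ)*(cc:ℚ))*h2
        + ((u:ℚ)*(lam2:ℚ)^n3*t11/(v:ℚ))*hccq
  have hvxi : (v:ℚ)*(((lam1:ℚ)^N*t00 - (lam2:ℚ)^N*t11)/v)
      = ((lam1^(n2+n3)*m1 - lam2^(n1+n3)*m2 : ℤ) : ℚ) := by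
    have e1 : (lam1:ℚ)^N*t00 = ((lam1^(n2+n3)*m1 : ℤ):ℚ) := by
      push_cast; rw [hN]; rw [show n1+n2+n3 = (n2+n3)+n1 by ring, pow_add]
      linear_combination ((lam1:ℚ)^(n2+n3))*hm1
    have e2 : (lam2:ℚ)^N*t11 = ((lam2^(n1+n3)*m2 : ℤ):ℚ) := by
      push_cast; rw [hN]; rw [show n1+n2+n3 = (n1+n3)+n2 by ring, pow_add]
      linear_combination ((lam2:ℚ)^(n1+n3))*hm2
    push_cast
    field_simp
    push_cast at e1 e2
    linear_combination e1 - e2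
  obtain ⟨w, hw⟩ := intify u v hcop _ ⟨_, huxi⟩ ⟨_, hvxi⟩
  obtain ⟨cN, hcN⟩ : v ∣ lam1^N - lam2^N := dvd_trans hdvd (sub_dvd_pow_sub_pow lam1 lam2 _)
  have hcNq : (lam1:ℚ)^N - (lam2:ℚ)^N = (v:ℚ)*cN := by
    exact_mod_cast congrArg (Int.cast : ℤ → ℚ) hcN
  refine ⟨ht10, ht01, ⟨n1, m1, hm1⟩, ⟨n2, m2, hm2⟩,
    ⟨w*lam2^N - cN*lam2^(n1+n3)*m2, N, ?_⟩⟩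
  have e2 : (lam2:ℚ)^N*t11 = ((lam2^(n1+n3)*m2 : ℤ):ℚ) := by
    push_cast; rw [hN]; rw [show n1+n2+n3 = (n1+n3)+n2 by ring, pow_add]
    linear_combination ((lam2:ℚ)^(n1+n3))*hm2
  have hwq : (lam1:ℚ)^N*t00 - (lam2:ℚ)^N*t11 = (v:ℚ)*w := by
    field_simp at hw
    linear_combination hw
  have hkey : (t00 - t11) * ((lam1:ℚ)*(lam2:ℚ))^N
      = ((w*lam2^N - cN*lam2^(n1+n3)*m2 : ℤ):ℚ) * (v:ℚ) := by
    push_cast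
    push_cast at e2
    linear_combination ((lam2:ℚ)^N)*hwq - ((lam2:ℚ)^N*t11)*hcNq - ((v:ℚ)*(cN:ℚ))*e2
  rw [div_eq_div_iff hv (pow_ne_zero _ (mul_ne_zero hl1 hl2))]
  linear_combination hkey

/-- Core of the converse direction. -/
lemma convCore (lam1 lam2 u v : ℤ) (hdvd : v ∣ lam1 - lam2)
    (A : Matrix (Fin 2) (Fin 2) ℤ)
    (hv : (v:ℚ) ≠ 0) (hl1 : (lam1:ℚ) ≠ 0) (hl2 : (lam2:ℚ) ≠ 0)
    (hpow : ∀ m : ℕ, (Aq A) ^ m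
      = !![(lam1:ℚ)^m, (u:ℚ)*((lam2:ℚ)^m-(lam1:ℚ)^m)/v; 0, (lam2:ℚ)^m])
    (GAiff : ∀ x : Fin 2 → ℚ, x ∈ GA A ↔
      ∃ (m : ℕ) (z : Fin 2 → ℤ), (Aq A) ^ m *ᵥ x = fun i => ((z i : ℚ)))
    (x1 x2 : ℚ) (T : Matrix (Fin 2) (Fin 2) ℚ)
    (hT : T = !![x1, (u:ℚ)*(x2-x1)/v; 0, x2])
    (k1 : ℕ) (m1 : ℤ) (hx1 : (lam1:ℚ)^k1*x1 = m1)
    (k2 : ℕ) (m2 : ℤ) (hx2 : (lam2:ℚ)^k2*x2 = m2)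
    (a : ℤ) (l : ℕ) (hR : (x1 - x2)/(v:ℚ) = (a:ℚ)/((lam1:ℚ)*(lam2:ℚ))^l) :
    ∀ w ∈ GA A, T *ᵥ w ∈ GA A := by
  have hR' : (x1 - x2)*((lam1:ℚ)*(lam2:ℚ))^l = (a:ℚ)*v := by
    rw [div_eq_div_iff hv (pow_ne_zero _ (mul_ne_zero hl1 hl2))] at hR
    linear_combination hR
  have hstar : m1*lam1^l*lam2^(l+k2) - m2*lam1^(l+k1)*lam2^l = a*v*lam1^k1*lam2^k2 := by
    have hq : (m1*lam1^l*lam2^(l+k2) - m2*lam1^(l+k1)*lam2^l : ℚ)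
        = (a*v*lam1^k1*lam2^k2 : ℚ) := by
      push_cast
      linear_combination -((lam1:ℚ)^l*(lam2:ℚ)^(l+k2))*hx1
        + ((lam1:ℚ)^(l+k1)*(lam2:ℚ)^l)*hx2 + ((lam1:ℚ)^k1*(lam2:ℚ)^k2)*hR'
    exact_mod_cast hq
  set X : ℤ := lam1^(k2+2*l)*m1 - lam2^(k1+2*l)*m2 with hXdef
  have hXdecomp : X = lam1^l*m1*(lam1^(k2+l) - lam2^(k2+l))
      + lam2^l*m2*(lam1^(k1+l) - lam2^(k1+l)) + a*v*lam1^k1*lam2^k2 := by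
    rw [hXdef]; linear_combination hstar
  obtain ⟨ww, hww⟩ : v ∣ X := by
    rw [hXdecomp]
    have d1 : v ∣ lam1^(k2+l) - lam2^(k2+l) := hdvd.trans (sub_dvd_pow_sub_pow _ _ _)
    have d2 : v ∣ lam1^(k1+l) - lam2^(k1+l) := hdvd.trans (sub_dvd_pow_sub_pow _ _ _)
    exact dvd_add (dvd_add (d1.mul_left _) (d2.mul_left _))
      ⟨a*lam1^k1*lam2^k2, by ring⟩
  have hwwq : ((lam1:ℚ)^(k2+2*l)*(m1:ℚ) - (lam2:ℚ)^(k1+2*l)*(m2:ℚ)) = (v:ℚ)*(ww:ℚ) := by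
    exact_mod_cast congrArg (Int.cast : ℤ → ℚ) hww
  set N : ℕ := k1 + k2 + 2*l with hN
  have hBN : (Aq A)^N * T
      = Aq !![lam1^(k2+2*l)*m1, -(u*ww); 0, lam2^(k1+2*l)*m2] := by
    rw [hpow N, hT, Aq_fin_two, Matrix.mul_fin_two]
    ext i j
    fin_cases i <;> fin_cases j
    · show (lam1:ℚ)^N*x1 + (u:ℚ)*((lam2:ℚ)^N-(lam1:ℚ)^N)/v*0 = ((lam1^(k2+2*l)*m1 : ℤ):ℚ)
      push_cast
      rw [hN]
      linear_combination (norm := (field_simp; ring1)) ((lam1:ℚ)^(k2+2*l))*hx1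
    · show (lam1:ℚ)^N*((u:ℚ)*(x2-x1)/v) + (u:ℚ)*((lam2:ℚ)^N-(lam1:ℚ)^N)/v*x2
        = ((-(u*ww) : ℤ):ℚ)
      push_cast
      rw [hN]
      linear_combination (norm := (field_simp; ring1))
        (-((u:ℚ)/(v:ℚ))*(lam1:ℚ)^(k2+2*l))*hx1 + (((u:ℚ)/(v:ℚ))*(lam2:ℚ)^(k1+2*l))*hx2
          - ((u:ℚ)/(v:ℚ))*hwwq
    · show (0:ℚ)*x1 + (lam2:ℚ)^N*0 = ((0:ℤ):ℚ)
      push_cast; ring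
    · show (0:ℚ)*((u:ℚ)*(x2-x1)/v) + (lam2:ℚ)^N*x2 = ((lam2^(k1+2*l)*m2 : ℤ):ℚ)
      push_cast
      rw [hN]
      linear_combination (norm := (field_simp; ring1)) ((lam2:ℚ)^(k1+2*l))*hx2
  have hcomm : ∀ n : ℕ, T * (Aq A)^n = (Aq A)^n * T := by
    intro n
    rw [hpow n, hT, Matrix.mul_fin_two, Matrix.mul_fin_two]
    ext i j
    fin_cases i <;> fin_cases j
    · show x1*(lam1:ℚ)^n + (u:ℚ)*(x2-x1)/v*0 = (lam1:ℚ)^n*x1 + (u:ℚ)*((lam2:ℚ)^n-(lam1:ℚ)^n)/v*0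
      ring
    · show x1*((u:ℚ)*((lam2:ℚ)^n-(lam1:ℚ)^n)/v) + (u:ℚ)*(x2-x1)/v*(lam2:ℚ)^n
        = (lam1:ℚ)^n*((u:ℚ)*(x2-x1)/v) + (u:ℚ)*((lam2:ℚ)^n-(lam1:ℚ)^n)/v*x2
      field_simp
      ring
    · show (0:ℚ)*(lam1:ℚ)^n + x2*0 = (0:ℚ)*x1 + (lam2:ℚ)^n*0
      ring
    · show (0:ℚ)*((u:ℚ)*((lam2:ℚ)^n-(lam1:ℚ)^n)/v) + x2*(lam2:ℚ)^n
        = (0:ℚ)*((u:ℚ)*(x2-x1)/v) + (lam2:ℚ)^n*x2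
      ring
  intro w hw
  rw [GAiff] at hw ⊢
  obtain ⟨n0, z, hz⟩ := hw
  refine ⟨n0 + N, !![lam1^(k2+2*l)*m1, -(u*ww); 0, lam2^(k1+2*l)*m2] *ᵥ z, ?_⟩
  have hmul : (Aq A)^(n0+N) * T = ((Aq A)^N * T) * (Aq A)^n0 := by
    rw [Nat.add_comm n0 N, pow_add, Matrix.mul_assoc, ← hcomm n0, ← Matrix.mul_assoc]
  rw [Matrix.mulVec_mulVec, hmul, ← Matrix.mulVec_mulVec, ← Matrix.mulVec_mulVec, hz,
    Matrix.mulVec_mulVec, hBN, Aq_mulVec]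

/-- case (b) of the 2-dimensional reducible situation. -/
theorem stmt4 (lam1 lam2 u v : ℤ) (hcop : Int.gcd u v = 1) (hdvd : v ∣ lam1 - lam2)
    (A : Matrix (Fin 2) (Fin 2) ℤ) (hA : A.det ≠ 0)
    (hAform : Aq A = M2q u v * !![(lam1 : ℚ), 0; 0, (lam2 : ℚ)] * (M2q u v)⁻¹)
    (hP' : (Pbad A).Nonempty)
    (hb1 : ∃ p : ℕ, p.Prime ∧ (p : ℤ) ∣ lam1 ∧ ¬ (p : ℤ) ∣ lam2)
    (hb2 : ∃ p : ℕ, p.Prime ∧ (p : ℤ) ∣ lam2 ∧ ¬ (p : ℤ) ∣ lam1)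
    (T : Matrix (Fin 2) (Fin 2) ℚ) :
    (∀ w ∈ GA A, T *ᵥ w ∈ GA A) ↔
      ∃ x1 x2 : ℚ,
        T = M2q u v * !![x1, 0; 0, x2] * (M2q u v)⁻¹ ∧
        (∃ (k : ℕ) (m : ℤ), (lam1 : ℚ) ^ k * x1 = (m : ℚ)) ∧
        (∃ (k : ℕ) (m : ℤ), (lam2 : ℚ) ^ k * x2 = (m : ℚ)) ∧
        (x1 - x2) / (v : ℚ) ∈ Rdet A := by
  -- setup
  have hdetAq : (Aq A).det = ((A.det : ℤ) : ℚ) := by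
    simpa [Aq, RingHom.mapMatrix_apply] using (RingHom.map_det (Int.castRingHom ℚ) A).symm
  have hdetAq0 : (Aq A).det ≠ 0 := by rw [hdetAq]; exact_mod_cast hA
  have hv : (v : ℚ) ≠ 0 := by
    intro h0
    apply hdetAq0
    rw [hAform]
    have : (M2q u v).det = 0 := by simp [M2q, Matrix.det_fin_two_of, h0]
    rw [Matrix.det_mul, Matrix.det_mul, this, Matrix.det_nonsing_inv, this]
    simp
  have hMinv : (M2q u v)⁻¹ = !![1, -(u:ℚ)/v; 0, 1/v] := by
    apply Matrix.inv_eq_right_inv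
    rw [M2q, Matrix.mul_fin_two, Matrix.one_fin_two]
    congr 1 <;> field_simp <;> simp [hv]
  have hMform : ∀ x1 x2 : ℚ, M2q u v * !![x1, 0; 0, x2] * (M2q u v)⁻¹
      = !![x1, (u:ℚ)*(x2-x1)/v; 0, x2] := by
    intro x1 x2
    rw [hMinv, M2q, Matrix.mul_fin_two, Matrix.mul_fin_two]
    ext i j
    fin_cases i <;> fin_cases j <;>
      simp only [Matrix.cons_val', Matrix.cons_val_zero, Matrix.cons_val_one,
        Matrix.head_cons, Matrix.head_fin_const, Matrix.empty_val',
        Matrix.cons_val_fin_one, Matrix.of_apply, Fin.zero_eta, Fin.mk_one] <;> field_simp <;> ring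
  have hAq : Aq A = !![(lam1:ℚ), (u:ℚ)*((lam2:ℚ)-(lam1:ℚ))/v; 0, (lam2:ℚ)] := by
    rw [hAform, hMform]
  have hdet : ((A.det : ℤ) : ℚ) = (lam1 : ℚ) * (lam2 : ℚ) := by
    rw [← hdetAq, hAq, Matrix.det_fin_two_of]
    ring
  have hl1 : (lam1 : ℚ) ≠ 0 := by
    intro h; rw [h] at hdet; simp at hdet; exact hA hdet
  have hl2 : (lam2 : ℚ) ≠ 0 := by
    intro h; rw [h] at hdet; simp at hdet; exact hA hdet
  have hpow : ∀ m : ℕ, (Aq A) ^ m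
      = !![(lam1:ℚ)^m, (u:ℚ)*((lam2:ℚ)^m-(lam1:ℚ)^m)/v; 0, (lam2:ℚ)^m] := by
    intro m
    induction m with
    | zero => simp [Matrix.one_fin_two]
    | succ m ih =>
        rw [pow_succ, ih, hAq, Matrix.mul_fin_two]
        ext i j
        fin_cases i <;> fin_cases j <;>
          simp only [Matrix.cons_val', Matrix.cons_val_zero, Matrix.cons_val_one,
            Matrix.head_cons, Matrix.head_fin_const, Matrix.empty_val',
            Matrix.cons_val_fin_one, Matrix.of_apply, Fin.zero_eta, Fin.mk_one] <;> field_simp <;> ring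
  have GAiff := fun x => mem_GA_iff (A := A) hA x
  have memQ := fun x y => GA_pair_iff lam1 lam2 u v A hpow GAiff x y
  constructor
  · -- forward direction
    intro hstab
    have hTv : ∀ x y : ℚ, T *ᵥ ![x, y] = ![T 0 0 * x + T 0 1 * y, T 1 0 * x + T 1 1 * y] := by
      intro x y
      funext i
      fin_cases i <;> simp [Matrix.mulVec, dotProduct, Fin.sum_univ_two]
    have hstab2 : ∀ x y : ℚ,
        (∃ (n:ℕ) (z1 z2 : ℤ),
          (lam1:ℚ)^n*x + (u:ℚ)*((lam2:ℚ)^n-(lam1:ℚ)^n)/v*y = z1 ∧ (lam2:ℚ)^n*y = z2) →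
        (∃ (n:ℕ) (z1 z2 : ℤ),
          (lam1:ℚ)^n*(T 0 0*x+T 0 1*y) + (u:ℚ)*((lam2:ℚ)^n-(lam1:ℚ)^n)/v*(T 1 0*x+T 1 1*y) = z1
            ∧ (lam2:ℚ)^n*(T 1 0*x+T 1 1*y) = z2) := by
      intro x y hxy
      have hmem := hstab ![x,y] ((memQ x y).mpr hxy)
      rw [hTv x y] at hmem
      exact (memQ _ _).mp hmem
    obtain ⟨ht10, ht01, hiii, hiv, ⟨a, l, hRl⟩⟩ :=
      fwdCore lam1 lam2 u v hcop hdvd hv hl1 hl2 hb1 hb2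
        (T 0 0) (T 0 1) (T 1 0) (T 1 1) hstab2
    refine ⟨T 0 0, T 1 1, ?_, hiii, hiv, ⟨a, l, ?_⟩⟩
    · rw [hMform]
      ext i j
      fin_cases i <;> fin_cases j
      · show T 0 0 = T 0 0
        rfl
      · show T 0 1 = (u:ℚ)*(T 1 1 - T 0 0)/v
        rw [eq_div_iff hv]
        linear_combination ht01
      · show T 1 0 = 0
        exact ht10
      · show T 1 1 = T 1 1
        rfl
    · show (T 0 0 - T 1 1) / (v:ℚ) = (a:ℚ) / ((A.det : ℚ)) ^ l
      rw [show ((A.det : ℚ)) = (lam1:ℚ)*(lam2:ℚ) from hdet]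
      exact hRl
  · -- converse direction
    rintro ⟨x1, x2, hTform, ⟨k1, m1, hx1⟩, ⟨k2, m2, hx2⟩, ⟨a, l, hRa⟩⟩
    have hT : T = !![x1, (u:ℚ)*(x2-x1)/v; 0, x2] := by rw [hTform, hMform]
    have hR : (x1 - x2)/(v:ℚ) = (a:ℚ)/((lam1:ℚ)*(lam2:ℚ))^l := by
      rw [show ((A.det : ℚ)) = (lam1:ℚ)*(lam2:ℚ) from hdet] at hRa
      exact hRa
    exact convCore lam1 lam2 u v hdvd A hv hl1 hl2 hpow GAiff x1 x2 T hT
      k1 m1 hx1 k2 m2 hx2 a l hR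
end
end

section
/- Let A ∈ M_n(ℤ) be non-singular with h_A irreducible over ℚ. Let K be a number field with ring of integers O_K, λ ∈ O_K a root of h_A with K = ℚ(λ), and let u ∈ K^n be a nonzero vector with all coordinates in O_K satisfying (A over K)·u = λ·u. Then for every x ∈ K such that λ^k·x ∈ O_K for some k ∈ ℕ, the vector (Tr_{K/ℚ}(x·u_1), …, Tr_{K/ℚ}(x·u_n)) ∈ ℚ^n belongs to G_A, where Tr_{K/ℚ} : K → ℚ is the field trace. -/
open Matrix Polynomial

noncomputable section

/-- `t_p`: multiplicity of `0` as a root of `h_A` mod `p`. -/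
def tp {n : ℕ} (A : Matrix (Fin n) (Fin n) ℤ) (p : ℕ) : ℕ :=
  Polynomial.rootMultiplicity 0 (A.charpoly.map (Int.castRingHom (ZMod p)))

/-- Auxiliary version of Statement 14 without the unused hypotheses. -/
theorem stmt14_aux (n : ℕ) (A : Matrix (Fin n) (Fin n) ℤ) (hA : A.det ≠ 0)
    (K : Type) [Field K] [NumberField K] (lam : K)
    (u : Fin n → K) (huint : ∀ i, IsIntegral ℤ (u i))
    (hAu : (A.map (Int.cast : ℤ → K)) *ᵥ u = lam • u) :
    ∀ x : K, (∃ k : ℕ, IsIntegral ℤ (lam ^ k * x)) →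
      (fun i => Algebra.trace ℚ K (x * u i)) ∈ GA A := by
  intro x ⟨k, hk⟩
  set T : K →ₗ[ℚ] ℚ := Algebra.trace ℚ K with hT
  have key : ∀ y : K, (Aq A) *ᵥ (fun i => T (y * u i)) = fun i => T ((lam * y) * u i) := by
    intro y
    funext i
    have hlam : lam * u i = ∑ j, (A i j : K) * u j := by
      have := congrFun hAu i
      simp [Matrix.mulVec, Matrix.map_apply, dotProduct] at this
      simpa using this.symm
    have h1 : (lam * y) * u i = y * (lam * u i) := by ring
    rw [h1, hlam, Finset.mul_sum]
    have h2 : T (∑ j, y * ((A i j : K) * u j)) = ∑ j, (A i j : ℚ) * T (y * u j) := by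
      rw [map_sum]
      congr 1
      funext j
      have h3 : y * ((A i j : K) * u j) = (A i j : ℚ) • (y * u j) := by
        rw [Algebra.smul_def, map_intCast]
        ring
      rw [h3, T.map_smul, smul_eq_mul]
    rw [h2]
    simp [Matrix.mulVec, Aq, dotProduct, Matrix.map_apply]
  have iter : ∀ m : ℕ, ∀ y : K,
      ((Aq A) ^ m) *ᵥ (fun i => T (y * u i)) = fun i => T ((lam ^ m * y) * u i) := by
    intro m
    induction m with
    | zero => intro y; simp
    | succ m ih =>
      intro y
      rw [pow_succ, ← Matrix.mulVec_mulVec, key y, ih (lam * y)]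
      funext i
      congr 2
      ring
  -- the trace vector of lam^k * x has integer entries
  have hz : ∀ i, ∃ z : ℤ, (z : ℚ) = T ((lam ^ k * x) * u i) := by
    intro i
    have hi : IsIntegral ℤ ((lam ^ k * x) * u i) := hk.mul (huint i)
    exact IsIntegrallyClosed.isIntegral_iff.mp (Algebra.isIntegral_trace hi)
  choose z hzeq using hz
  have hdet : IsUnit ((Aq A) ^ k).det := by
    rw [Matrix.det_pow]
    refine (isUnit_iff_ne_zero.mpr ?_).pow k
    have hd : (Aq A).det = (A.det : ℚ) := by
      rw [Aq, show A.map (Int.cast : ℤ → ℚ) = (Int.castRingHom ℚ).mapMatrix A from rfl,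
        ← RingHom.map_det]
      rfl
    rw [hd]
    exact_mod_cast hA
  have hvec : ((Aq A) ^ k) *ᵥ (fun i => T (x * u i)) = fun i => ((z i : ℚ)) := by
    rw [iter k x]
    funext i
    exact (hzeq i).symm
  refine ⟨-(k : ℤ), z, ?_⟩
  rw [← hvec, Matrix.zpow_neg_natCast, Matrix.mulVec_mulVec, Matrix.nonsing_inv_mul _ hdet,
    Matrix.one_mulVec]

/-- for `x ∈ O_K[λ⁻¹]`, the vector of traces `(Tr_{K/ℚ}(x·u_i))_i`
belongs to `G_A`. -/
theorem stmt14 (n : ℕ) (A : Matrix (Fin n) (Fin n) ℤ) (hA : A.det ≠ 0)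
    (hirr : Irreducible (A.charpoly.map (Int.castRingHom ℚ)))
    (K : Type) [Field K] [NumberField K] (lam : K)
    (hint : IsIntegral ℤ lam)
    (hroot : Polynomial.aeval lam (A.charpoly.map (Int.castRingHom ℚ)) = 0)
    (hgenK : Algebra.adjoin ℚ ({lam} : Set K) = ⊤)
    (u : Fin n → K) (hu : u ≠ 0) (huint : ∀ i, IsIntegral ℤ (u i))
    (hAu : (A.map (Int.cast : ℤ → K)) *ᵥ u = lam • u) :
    ∀ x : K, (∃ k : ℕ, IsIntegral ℤ (lam ^ k * x)) →
      (fun i => Algebra.trace ℚ K (x * u i)) ∈ GA A :=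
  stmt14_aux n A hA K lam u huint hAu
end
end
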